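/- For integer m with |m| > 1, the Fourier coefficient a_m^C(x) = ∫_{-1/2}^{1/2} |e^{2πix/L} + e^{2πit}| · |1 + e^{2πit}| e^{2πimt} dt equals (4/π) · ((−1)^{m+2}/(m(m²−1))) · e^{imπx/L} [ cos(πx/L) sin(mπx/L) − m sin(πx/L) cos(mπx/L) ] for 0 ≤ x ≤ L. -/

import Mathlib

open Real

private lemma abs_exp_add_exp (a b : ℝ) :
    ‖Complex.exp (a * Complex.I) + Complex.exp (b * Complex.I)‖ =
      2 * |Real.cos ((a - b) / 2)| := by
  have hc : ((2 * Real.cos ((a - b) / 2) : ℝ) : ℂ) =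
      Complex.exp ((((a - b) / 2 : ℝ) : ℂ) * Complex.I) +
        Complex.exp ((((b - a) / 2 : ℝ) : ℂ) * Complex.I) := by
    push_cast
    rw [Complex.cos]
    ring_nf
  have hsplit : Complex.exp (a * Complex.I) + Complex.exp (b * Complex.I) =
      Complex.exp ((((a + b) / 2 : ℝ) : ℂ) * Complex.I) *
        ((2 * Real.cos ((a - b) / 2) : ℝ) : ℂ) := by
    rw [hc, mul_add, ← Complex.exp_add, ← Complex.exp_add]
    congr 2 <;> push_cast <;> ring
  rw [hsplit, norm_mul, Complex.norm_exp_ofReal_mul_I, one_mul, Complex.norm_real, Real.norm_eq_abs, abs_mul]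
  norm_num

private lemma exp_integral {k : ℂ} (hk : k ≠ 0) (a b : ℝ) :
    (∫ t in a..b, Complex.exp (2 * ↑π * Complex.I * k * ↑t)) =
      -Complex.I * (Complex.exp (2 * ↑π * Complex.I * k * ↑b) -
        Complex.exp (2 * ↑π * Complex.I * k * ↑a)) / (2 * ↑π * k) := by
  have hπ : ((π : ℝ) : ℂ) ≠ 0 := Complex.ofReal_ne_zero.mpr Real.pi_ne_zero
  have hc : (2 * (π : ℂ) * Complex.I * k) ≠ 0 := by
    apply mul_ne_zero (mul_ne_zero (mul_ne_zero two_ne_zero hπ) Complex.I_ne_zero) hk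
  rw [integral_exp_mul_complex hc,
    show (2 * (π:ℂ) * Complex.I * k) = 2 * (π:ℂ) * k * Complex.I from by ring,
    div_eq_mul_inv, mul_inv, Complex.inv_I]
  ring

private lemma solve3 (e s a z : ℂ) (ha : a ≠ 0) (hs2 : s * s = 1) (h : e * s * a = z) :
    e = z * s / a := by
  rw [eq_div_iff ha]
  linear_combination s * h - e * a * hs2

private lemma decomp (X t : ℝ) (m : ℤ) :
    ((4 * (Real.cos (π * X - π * t) * Real.cos (π * t)) : ℝ) : ℂ) *
        Complex.exp (2 * ↑π * Complex.I * (m : ℂ) * ↑t) =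
      Complex.exp ((↑(π * X)) * Complex.I) * Complex.exp (2 * ↑π * Complex.I * (m : ℂ) * ↑t)
      + (Complex.exp ((↑(π * X)) * Complex.I))⁻¹ * Complex.exp (2 * ↑π * Complex.I * (m : ℂ) * ↑t)
      + Complex.exp ((↑(π * X)) * Complex.I) * Complex.exp (2 * ↑π * Complex.I * ((m : ℂ) - 1) * ↑t)
      + (Complex.exp ((↑(π * X)) * Complex.I))⁻¹ *
          Complex.exp (2 * ↑π * Complex.I * ((m : ℂ) + 1) * ↑t) := by
  set A := Complex.exp ((↑(π * X)) * Complex.I) with hAdef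
  set B := Complex.exp ((↑(π * t)) * Complex.I) with hBdef
  have hA : A ≠ 0 := Complex.exp_ne_zero _
  have hB : B ≠ 0 := Complex.exp_ne_zero _
  have hAB : Complex.exp ((↑(π * X - π * t) : ℂ) * Complex.I) = A * B⁻¹ := by
    rw [hAdef, hBdef, ← Complex.exp_neg, ← Complex.exp_add]
    congr 1; push_cast; ring
  have hAB' : Complex.exp (-(↑(π * X - π * t) : ℂ) * Complex.I) = A⁻¹ * B := by
    rw [hAdef, hBdef, ← Complex.exp_neg, ← Complex.exp_add]
    congr 1; push_cast; ring
  have h1 : ((Real.cos (π * X - π * t) : ℝ) : ℂ) = (A * B⁻¹ + A⁻¹ * B) / 2 := by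
    rw [Complex.ofReal_cos, Complex.cos, hAB, hAB']
  have h2 : ((Real.cos (π * t) : ℝ) : ℂ) = (B + B⁻¹) / 2 := by
    rw [Complex.ofReal_cos, Complex.cos, neg_mul, Complex.exp_neg, hBdef]
  have h3 : Complex.exp (2 * ↑π * Complex.I * ((m : ℂ) - 1) * ↑t) =
      Complex.exp (2 * ↑π * Complex.I * (m : ℂ) * ↑t) * (B * B)⁻¹ := by
    rw [eq_mul_inv_iff_mul_eq₀ (mul_ne_zero hB hB), hBdef, ← Complex.exp_add,
      ← Complex.exp_add]
    congr 1; push_cast; ring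
  have h4 : Complex.exp (2 * ↑π * Complex.I * ((m : ℂ) + 1) * ↑t) =
      Complex.exp (2 * ↑π * Complex.I * (m : ℂ) * ↑t) * (B * B) := by
    rw [hBdef, ← Complex.exp_add, ← Complex.exp_add]
    congr 1; push_cast; ring
  rw [Complex.ofReal_mul, Complex.ofReal_mul, h1, h2, h3, h4]
  push_cast
  field_simp
  ring

private lemma sum_integral (A : ℂ) (μ : ℂ) (h0 : μ ≠ 0) (h1 : μ - 1 ≠ 0) (h2 : μ + 1 ≠ 0)
    (a b : ℝ) :
    (∫ t in a..b, (A * Complex.exp (2 * ↑π * Complex.I * μ * ↑t)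
      + A⁻¹ * Complex.exp (2 * ↑π * Complex.I * μ * ↑t)
      + A * Complex.exp (2 * ↑π * Complex.I * (μ - 1) * ↑t)
      + A⁻¹ * Complex.exp (2 * ↑π * Complex.I * (μ + 1) * ↑t)))
    = A * (-Complex.I * (Complex.exp (2 * ↑π * Complex.I * μ * ↑b) -
            Complex.exp (2 * ↑π * Complex.I * μ * ↑a)) / (2 * ↑π * μ))
      + A⁻¹ * (-Complex.I * (Complex.exp (2 * ↑π * Complex.I * μ * ↑b) -
            Complex.exp (2 * ↑π * Complex.I * μ * ↑a)) / (2 * ↑π * μ))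
      + A * (-Complex.I * (Complex.exp (2 * ↑π * Complex.I * (μ - 1) * ↑b) -
            Complex.exp (2 * ↑π * Complex.I * (μ - 1) * ↑a)) / (2 * ↑π * (μ - 1)))
      + A⁻¹ * (-Complex.I * (Complex.exp (2 * ↑π * Complex.I * (μ + 1) * ↑b) -
            Complex.exp (2 * ↑π * Complex.I * (μ + 1) * ↑a)) / (2 * ↑π * (μ + 1))) := by
  have hInt : ∀ (z k : ℂ),
      IntervalIntegrable (fun t : ℝ => z * Complex.exp (2 * ↑π * Complex.I * k * ↑t))
        MeasureTheory.volume a b := by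
    intro z k
    apply Continuous.intervalIntegrable
    fun_prop
  rw [intervalIntegral.integral_add (((hInt _ _).add (hInt _ _)).add (hInt _ _)) (hInt _ _),
    intervalIntegral.integral_add ((hInt _ _).add (hInt _ _)) (hInt _ _),
    intervalIntegral.integral_add (hInt _ _) (hInt _ _),
    intervalIntegral.integral_const_mul, intervalIntegral.integral_const_mul,
    intervalIntegral.integral_const_mul, intervalIntegral.integral_const_mul,
    exp_integral h0, exp_integral h1, exp_integral h2]

set_option maxHeartbeats 2000000 in
theorem am_fourier_coefficient (L x : ℝ) (hL : 0 < L) (hx0 : 0 ≤ x) (hxL : x ≤ L)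
    (m : ℤ) (hm : 1 < |m|) :
    (∫ t in (-(1:ℝ)/2)..(1/2),
        ((‖Complex.exp (2 * π * Complex.I * (x / L)) + Complex.exp (2 * π * Complex.I * t)‖ *
            ‖1 + Complex.exp (2 * π * Complex.I * t)‖ : ℝ) : ℂ) *
          Complex.exp (2 * π * Complex.I * m * t)) =
      (4 / π) * ((-1 : ℂ) ^ (m + 2) / (m * (m ^ 2 - 1))) *
        Complex.exp (Complex.I * m * π * x / L) *
        ((Real.cos (π * x / L) * Real.sin (m * π * x / L)
            - m * Real.sin (π * x / L) * Real.cos (m * π * x / L) : ℝ) : ℂ) := by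
  have hπ : (0:ℝ) < π := pi_pos
  have hπC : ((π : ℝ) : ℂ) ≠ 0 := Complex.ofReal_ne_zero.mpr Real.pi_ne_zero
  have hmr : m < -1 ∨ 1 < m := by
    rcases lt_abs.mp hm with h | h
    · right; exact h
    · left; omega
  have hm0 : (m:ℂ) ≠ 0 := Int.cast_ne_zero.mpr (by rcases hmr with h|h <;> omega)
  have hm1 : (m:ℂ) - 1 ≠ 0 := by
    have : ((m - 1 : ℤ) : ℂ) ≠ 0 := Int.cast_ne_zero.mpr (by rcases hmr with h|h <;> omega)
    push_cast at this; exact this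
  have hm2 : (m:ℂ) + 1 ≠ 0 := by
    have : ((m + 1 : ℤ) : ℂ) ≠ 0 := Int.cast_ne_zero.mpr (by rcases hmr with h|h <;> omega)
    push_cast at this; exact this
  have hmsq : ((m:ℂ) ^ 2 - 1) ≠ 0 := by
    rw [show ((m:ℂ)^2 - 1) = ((m:ℂ) - 1) * ((m:ℂ) + 1) from by ring]
    exact mul_ne_zero hm1 hm2
  have hX0 : 0 ≤ x / L := div_nonneg hx0 hL.le
  have hX1 : x / L ≤ 1 := (div_le_one hL).mpr hxL
  set A := Complex.exp ((↑(π * (x / L)) : ℂ) * Complex.I) with hAdef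
  set V := Complex.exp (Complex.I * (m:ℂ) * ↑π * ↑x / ↑L) with hVdef
  set s := Complex.exp ((↑π : ℂ) * Complex.I * (m:ℂ)) with hsdef
  have hA : A ≠ 0 := Complex.exp_ne_zero _
  have hV : V ≠ 0 := Complex.exp_ne_zero _
  have hs2 : s * s = 1 := by
    rw [hsdef, ← Complex.exp_add,
      show ((↑π : ℂ) * Complex.I * (m:ℂ) + (↑π : ℂ) * Complex.I * (m:ℂ)) =
        (m:ℂ) * (2 * ↑π * Complex.I) from by ring]
    exact Complex.exp_int_mul_two_pi_mul_I m
  have hexppi : Complex.exp ((↑π : ℂ) * Complex.I) = -1 := Complex.exp_pi_mul_I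
  have hexpnegpi : Complex.exp (-((↑π : ℂ) * Complex.I)) = -1 := by
    rw [Complex.exp_neg, hexppi]; norm_num
  -- step 1 : rewrite integrand
  have key : ∀ t : ℝ,
      ((‖Complex.exp (2 * π * Complex.I * (x / L)) + Complex.exp (2 * π * Complex.I * t)‖ *
          ‖1 + Complex.exp (2 * π * Complex.I * t)‖ : ℝ) : ℂ) *
        Complex.exp (2 * π * Complex.I * m * t)
      = ((2 * |Real.cos ((2 * π * (x / L) - 2 * π * t) / 2)| *
            (2 * |Real.cos ((0 - 2 * π * t) / 2)|) : ℝ) : ℂ) *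
          Complex.exp (2 * π * Complex.I * m * t) := by
    intro t
    have e1 : Complex.exp (2 * (π:ℂ) * Complex.I * (↑x / ↑L)) =
        Complex.exp ((↑(2 * π * (x / L)) : ℂ) * Complex.I) := by
      congr 1; push_cast; ring
    have e2 : Complex.exp (2 * (π:ℂ) * Complex.I * (t:ℂ)) =
        Complex.exp ((↑(2 * π * t) : ℂ) * Complex.I) := by
      congr 1; push_cast; ring
    have e0 : (1 : ℂ) = Complex.exp ((↑(0:ℝ) : ℂ) * Complex.I) := by simp
    rw [e1, e2, e0, abs_exp_add_exp, abs_exp_add_exp]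
  rw [intervalIntegral.integral_congr (fun t _ => key t)]
  -- step 2 : split the integral at x/L - 1/2
  have ht0l : -(1:ℝ)/2 ≤ x / L - 1/2 := by linarith
  have ht0r : x / L - 1/2 ≤ 1/2 := by linarith
  have hgcont : Continuous fun t : ℝ =>
      ((2 * |Real.cos ((2 * π * (x / L) - 2 * π * t) / 2)| *
          (2 * |Real.cos ((0 - 2 * π * t) / 2)|) : ℝ) : ℂ) *
        Complex.exp (2 * π * Complex.I * m * t) := by
    fun_prop
  rw [← intervalIntegral.integral_add_adjacent_intervals
    (a := -(1:ℝ)/2) (b := x / L - 1/2) (c := 1/2)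
    (hgcont.intervalIntegrable _ _) (hgcont.intervalIntegrable _ _)]
  -- step 3 : pieces
  have P1 : (∫ t in (-(1:ℝ)/2)..(x / L - 1/2),
      ((2 * |Real.cos ((2 * π * (x / L) - 2 * π * t) / 2)| *
          (2 * |Real.cos ((0 - 2 * π * t) / 2)|) : ℝ) : ℂ) *
        Complex.exp (2 * π * Complex.I * m * t))
      = -(∫ t in (-(1:ℝ)/2)..(x / L - 1/2),
          (A * Complex.exp (2 * ↑π * Complex.I * (m : ℂ) * ↑t)
          + A⁻¹ * Complex.exp (2 * ↑π * Complex.I * (m : ℂ) * ↑t)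
          + A * Complex.exp (2 * ↑π * Complex.I * ((m : ℂ) - 1) * ↑t)
          + A⁻¹ * Complex.exp (2 * ↑π * Complex.I * ((m : ℂ) + 1) * ↑t))) := by
    rw [← intervalIntegral.integral_neg]
    apply intervalIntegral.integral_congr
    intro t ht
    rw [Set.uIcc_of_le ht0l] at ht
    obtain ⟨ht1, ht2⟩ := ht
    dsimp only
    have hc1 : |Real.cos ((2 * π * (x / L) - 2 * π * t) / 2)| =
        -Real.cos (π * (x / L) - π * t) := by
      rw [show (2 * π * (x / L) - 2 * π * t) / 2 = π * (x / L) - π * t from by ring]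
      apply abs_of_nonpos
      apply Real.cos_nonpos_of_pi_div_two_le_of_le
      · have h' : π * (x / L) - π * t - π / 2 = π * ((x / L) - t - 1/2) := by ring
        have h2 := mul_nonneg hπ.le (show (0:ℝ) ≤ (x / L) - t - 1/2 by linarith)
        linarith
      · have h' : π + π / 2 - (π * (x / L) - π * t) = π * (1 - (x / L) + t + 1/2) := by ring
        have h2 := mul_nonneg hπ.le (show (0:ℝ) ≤ 1 - (x / L) + t + 1/2 by linarith)
        linarith
    have hc2 : |Real.cos ((0 - 2 * π * t) / 2)| = Real.cos (π * t) := by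
      rw [show (0 - 2 * π * t) / 2 = -(π * t) from by ring, Real.cos_neg]
      apply abs_of_nonneg
      apply Real.cos_nonneg_of_mem_Icc
      constructor
      · have h' : π * t + π / 2 = π * (t + 1/2) := by ring
        have h2 := mul_nonneg hπ.le (show (0:ℝ) ≤ t + 1/2 by linarith)
        linarith
      · have h' : π / 2 - π * t = π * (1/2 - t) := by ring
        have h2 := mul_nonneg hπ.le (show (0:ℝ) ≤ 1/2 - t by linarith)
        linarith
    rw [hc1, hc2,
      show ((2 * -Real.cos (π * (x / L) - π * t) * (2 * Real.cos (π * t)) : ℝ) : ℂ)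
        = -((4 * (Real.cos (π * (x / L) - π * t) * Real.cos (π * t)) : ℝ) : ℂ) from by
          push_cast; ring,
      neg_mul, decomp (x / L) t m]
  have P2 : (∫ t in (x / L - 1/2)..(1/2:ℝ),
      ((2 * |Real.cos ((2 * π * (x / L) - 2 * π * t) / 2)| *
          (2 * |Real.cos ((0 - 2 * π * t) / 2)|) : ℝ) : ℂ) *
        Complex.exp (2 * π * Complex.I * m * t))
      = (∫ t in (x / L - 1/2)..(1/2:ℝ),
          (A * Complex.exp (2 * ↑π * Complex.I * (m : ℂ) * ↑t)
          + A⁻¹ * Complex.exp (2 * ↑π * Complex.I * (m : ℂ) * ↑t)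
          + A * Complex.exp (2 * ↑π * Complex.I * ((m : ℂ) - 1) * ↑t)
          + A⁻¹ * Complex.exp (2 * ↑π * Complex.I * ((m : ℂ) + 1) * ↑t))) := by
    apply intervalIntegral.integral_congr
    intro t ht
    rw [Set.uIcc_of_le ht0r] at ht
    obtain ⟨ht1, ht2⟩ := ht
    dsimp only
    have hc1 : |Real.cos ((2 * π * (x / L) - 2 * π * t) / 2)| =
        Real.cos (π * (x / L) - π * t) := by
      rw [show (2 * π * (x / L) - 2 * π * t) / 2 = π * (x / L) - π * t from by ring]
      apply abs_of_nonneg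
      apply Real.cos_nonneg_of_mem_Icc
      constructor
      · have h' : π * (x / L) - π * t + π / 2 = π * ((x / L) - t + 1/2) := by ring
        have h2 := mul_nonneg hπ.le (show (0:ℝ) ≤ (x / L) - t + 1/2 by linarith)
        linarith
      · have h' : π / 2 - (π * (x / L) - π * t) = π * (t - (x / L) + 1/2) := by ring
        have h2 := mul_nonneg hπ.le (show (0:ℝ) ≤ t - (x / L) + 1/2 by linarith)
        linarith
    have hc2 : |Real.cos ((0 - 2 * π * t) / 2)| = Real.cos (π * t) := by
      rw [show (0 - 2 * π * t) / 2 = -(π * t) from by ring, Real.cos_neg]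
      apply abs_of_nonneg
      apply Real.cos_nonneg_of_mem_Icc
      constructor
      · have h' : π * t + π / 2 = π * (t + 1/2) := by ring
        have h2 := mul_nonneg hπ.le (show (0:ℝ) ≤ t + 1/2 by linarith)
        linarith
      · have h' : π / 2 - π * t = π * (1/2 - t) := by ring
        have h2 := mul_nonneg hπ.le (show (0:ℝ) ≤ 1/2 - t by linarith)
        linarith
    rw [hc1, hc2,
      show ((2 * Real.cos (π * (x / L) - π * t) * (2 * Real.cos (π * t)) : ℝ) : ℂ)
        = ((4 * (Real.cos (π * (x / L) - π * t) * Real.cos (π * t)) : ℝ) : ℂ) from by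
          push_cast; ring,
      decomp (x / L) t m]
  rw [P1, P2, sum_integral A (m:ℂ) hm0 hm1 hm2, sum_integral A (m:ℂ) hm0 hm1 hm2]
  -- step 4 : endpoint values
  have F1 : Complex.exp (2 * ↑π * Complex.I * (m:ℂ) * ((1/2 : ℝ) : ℂ)) = s := by
    rw [hsdef]; congr 1; push_cast; ring
  have F2 : Complex.exp (2 * ↑π * Complex.I * (m:ℂ) * ((-(1:ℝ)/2 : ℝ) : ℂ)) = s := by
    have h : Complex.exp (2 * ↑π * Complex.I * (m:ℂ) * ((-(1:ℝ)/2 : ℝ) : ℂ)) * s * 1 = 1 := by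
      rw [mul_one, hsdef, ← Complex.exp_add,
        show (2 * (↑π:ℂ) * Complex.I * (m:ℂ) * ((-(1:ℝ)/2 : ℝ) : ℂ) + ↑π * Complex.I * ↑m)
          = 0 from by push_cast; ring, Complex.exp_zero]
    simpa using solve3 _ _ _ _ one_ne_zero hs2 h
  have F3 : Complex.exp (2 * ↑π * Complex.I * (m:ℂ) * ((x / L - 1/2 : ℝ) : ℂ)) = V * V * s := by
    have h : Complex.exp (2 * ↑π * Complex.I * (m:ℂ) * ((x / L - 1/2 : ℝ) : ℂ)) * s * 1
        = V * V := by
      rw [mul_one, hsdef, hVdef, ← Complex.exp_add, ← Complex.exp_add]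
      congr 1; push_cast; ring
    simpa using solve3 _ _ _ _ one_ne_zero hs2 h
  have F4 : Complex.exp (2 * ↑π * Complex.I * ((m:ℂ) - 1) * ((1/2 : ℝ) : ℂ)) = -s := by
    rw [show -s = s * Complex.exp (-(↑π * Complex.I)) from by rw [hexpnegpi]; ring, hsdef,
      ← Complex.exp_add]
    congr 1; push_cast; ring
  have F5 : Complex.exp (2 * ↑π * Complex.I * ((m:ℂ) - 1) * ((-(1:ℝ)/2 : ℝ) : ℂ)) = -s := by
    have h : Complex.exp (2 * ↑π * Complex.I * ((m:ℂ) - 1) * ((-(1:ℝ)/2 : ℝ) : ℂ)) * s * 1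
        = -1 := by
      rw [mul_one, hsdef, ← Complex.exp_add,
        show (2 * (↑π:ℂ) * Complex.I * ((m:ℂ) - 1) * ((-(1:ℝ)/2 : ℝ) : ℂ) + ↑π * Complex.I * ↑m)
          = ↑π * Complex.I from by push_cast; ring, hexppi]
    have := solve3 _ _ _ _ one_ne_zero hs2 h
    simpa using this
  have F6 : Complex.exp (2 * ↑π * Complex.I * ((m:ℂ) - 1) * ((x / L - 1/2 : ℝ) : ℂ))
      = -(V * V * (A⁻¹ * A⁻¹)) * s := by
    have h : Complex.exp (2 * ↑π * Complex.I * ((m:ℂ) - 1) * ((x / L - 1/2 : ℝ) : ℂ)) * s * (A * A)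
        = -(V * V) := by
      rw [show -(V * V) = V * V * Complex.exp (↑π * Complex.I) from by rw [hexppi]; ring,
        hsdef, hVdef, hAdef, ← Complex.exp_add, ← Complex.exp_add, ← Complex.exp_add,
        ← Complex.exp_add, ← Complex.exp_add]
      congr 1; push_cast; ring
    rw [solve3 _ _ _ _ (mul_ne_zero hA hA) hs2 h, div_eq_mul_inv, mul_inv]
    ring
  have F7 : Complex.exp (2 * ↑π * Complex.I * ((m:ℂ) + 1) * ((1/2 : ℝ) : ℂ)) = -s := by
    rw [show -s = s * Complex.exp (↑π * Complex.I) from by rw [hexppi]; ring, hsdef,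
      ← Complex.exp_add]
    congr 1; push_cast; ring
  have F8 : Complex.exp (2 * ↑π * Complex.I * ((m:ℂ) + 1) * ((-(1:ℝ)/2 : ℝ) : ℂ)) = -s := by
    have h : Complex.exp (2 * ↑π * Complex.I * ((m:ℂ) + 1) * ((-(1:ℝ)/2 : ℝ) : ℂ)) * s * 1
        = -1 := by
      rw [mul_one, hsdef, ← Complex.exp_add,
        show (2 * (↑π:ℂ) * Complex.I * ((m:ℂ) + 1) * ((-(1:ℝ)/2 : ℝ) : ℂ) + ↑π * Complex.I * ↑m)
          = -(↑π * Complex.I) from by push_cast; ring, hexpnegpi]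
    simpa using solve3 _ _ _ _ one_ne_zero hs2 h
  have F9 : Complex.exp (2 * ↑π * Complex.I * ((m:ℂ) + 1) * ((x / L - 1/2 : ℝ) : ℂ))
      = -(V * V * (A * A)) * s := by
    have h : Complex.exp (2 * ↑π * Complex.I * ((m:ℂ) + 1) * ((x / L - 1/2 : ℝ) : ℂ)) * s * 1
        = -(V * V * (A * A)) := by
      rw [mul_one,
        show -(V * V * (A * A)) = V * V * (A * A) * Complex.exp (-(↑π * Complex.I)) from by
          rw [hexpnegpi]; ring,
        hsdef, hVdef, hAdef, ← Complex.exp_add, ← Complex.exp_add, ← Complex.exp_add,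
        ← Complex.exp_add, ← Complex.exp_add]
      congr 1; push_cast; ring
    simpa using solve3 _ _ _ _ one_ne_zero hs2 h
  have hsval : ((-1:ℂ)) ^ (m + 2) = s := by
    rw [zpow_add₀ (by norm_num : (-1:ℂ) ≠ 0)]
    norm_num
    rw [hsdef, ← Complex.exp_pi_mul_I, ← Complex.exp_int_mul]
    congr 1; ring
  have hzarg : (((m:ℝ) * π * x / L : ℝ) : ℂ) * Complex.I
      = Complex.I * (m:ℂ) * ↑π * ↑x / ↑L := by push_cast; ring
  have hargA : ((π * x / L : ℝ) : ℂ) * Complex.I = (↑(π * (x / L)) : ℂ) * Complex.I := by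
    push_cast; ring
  have hzc : ((Real.cos ((m:ℝ) * π * x / L) : ℝ) : ℂ) = (V + V⁻¹) / 2 := by
    rw [Complex.ofReal_cos, Complex.cos, neg_mul, Complex.exp_neg, hzarg, ← hVdef]
  have hzs : ((Real.sin ((m:ℝ) * π * x / L) : ℝ) : ℂ) = (V⁻¹ - V) * Complex.I / 2 := by
    rw [Complex.ofReal_sin, Complex.sin, neg_mul, Complex.exp_neg, hzarg, ← hVdef]
  have hc1' : ((Real.cos (π * x / L) : ℝ) : ℂ) = (A + A⁻¹) / 2 := by
    rw [Complex.ofReal_cos, Complex.cos, neg_mul, Complex.exp_neg, hargA, ← hAdef]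
  have hs1' : ((Real.sin (π * x / L) : ℝ) : ℂ) = (A⁻¹ - A) * Complex.I / 2 := by
    rw [Complex.ofReal_sin, Complex.sin, neg_mul, Complex.exp_neg, hargA, ← hAdef]
  rw [F1, F2, F3, F4, F5, F6, F7, F8, F9, hsval, Complex.ofReal_sub, Complex.ofReal_mul,
    Complex.ofReal_mul, Complex.ofReal_mul, Complex.ofReal_intCast, hzc, hzs, hc1', hs1']
  have hd1 : 2 * (↑π:ℂ) * ↑m ≠ 0 := mul_ne_zero (mul_ne_zero two_ne_zero hπC) hm0
  have hd2 : 2 * (↑π:ℂ) * (↑m - 1) ≠ 0 := mul_ne_zero (mul_ne_zero two_ne_zero hπC) hm1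
  have hd3 : 2 * (↑π:ℂ) * (↑m + 1) ≠ 0 := mul_ne_zero (mul_ne_zero two_ne_zero hπC) hm2
  have hD : 4 * (↑π:ℂ) * ↑m * ((↑m - 1) * (↑m + 1)) ≠ 0 :=
    mul_ne_zero (mul_ne_zero (mul_ne_zero (by norm_num) hπC) hm0) (mul_ne_zero hm1 hm2)
  have conv1 : ∀ z X : ℂ, z * (-Complex.I * X / (2 * ↑π * ↑m))
      = (z * (-Complex.I * X) * (2 * ((↑m - 1) * (↑m + 1))))
        / (4 * ↑π * ↑m * ((↑m - 1) * (↑m + 1))) := by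
    intro z X
    rw [mul_div_assoc', div_eq_div_iff hd1 hD]; ring
  have conv2 : ∀ z X : ℂ, z * (-Complex.I * X / (2 * ↑π * (↑m - 1)))
      = (z * (-Complex.I * X) * (2 * (↑m * (↑m + 1))))
        / (4 * ↑π * ↑m * ((↑m - 1) * (↑m + 1))) := by
    intro z X
    rw [mul_div_assoc', div_eq_div_iff hd2 hD]; ring
  have conv3 : ∀ z X : ℂ, z * (-Complex.I * X / (2 * ↑π * (↑m + 1)))
      = (z * (-Complex.I * X) * (2 * (↑m * (↑m - 1))))
        / (4 * ↑π * ↑m * ((↑m - 1) * (↑m + 1))) := by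
    intro z X
    rw [mul_div_assoc', div_eq_div_iff hd3 hD]; ring
  have hQ : (↑m:ℂ) * (↑m ^ 2 - 1) ≠ 0 := by
    rw [show (↑m:ℂ) * (↑m ^ 2 - 1) = ↑m * ((↑m - 1) * (↑m + 1)) from by ring]
    exact mul_ne_zero hm0 (mul_ne_zero hm1 hm2)
  rw [conv1, conv1, conv2, conv3, conv1, conv1, conv2, conv3, ← add_div,
    ← add_div, ← add_div, ← add_div, ← add_div,
    ← add_div, ← neg_div, ← add_div, div_eq_iff hD]
  field_simp
  ring
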